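/- For a definite canonical system G the following are equivalent: (1) strong consistency; (2) coherence; (3) strong cut-elimination; (4) cut-elimination (every sequent derivable from no assumptions has a cut-free proof); (5) consistency (p₁ ⇒ p₂ is not derivable from no assumptions). -/

import Mathlib

/-- A propositional language: a type of connectives with arities. -/
structure Lang where
  Conn : Type
  arity : Conn → ℕ

/-- Formulas over a language, with atoms indexed by ℕ. -/
inductive Fm (L : Lang) : Type
  | atom : ℕ → Fm L
  | conn : (c : L.Conn) → (Fin (L.arity c) → Fm L) → Fm L

/-- The substitution determined by its values on atoms. -/
def Fm.subst {L : Lang} (σ : ℕ → Fm L) : Fm L → Fm L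
  | .atom n => σ n
  | .conn c f => .conn c (fun i => (f i).subst σ)

/-- A non-strict single-conclusion sequent Γ ⇒ E. -/
structure Sequent (L : Lang) where
  left : Set (Fm L)
  right : Option (Fm L)

/-- A Horn clause over atoms p₁,…,pₙ (represented by `Fin n`). -/
structure Clause (n : ℕ) where
  lhs : Set (Fin n)
  rhs : Option (Fin n)

/-- A canonical right-introduction rule for a connective. -/
structure RightRule (L : Lang) where
  conn : L.Conn
  prem : Set (Clause (L.arity conn))

/-- A canonical left-introduction rule, with hard and soft premises. -/
structure LeftRule (L : Lang) where
  conn : L.Conn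
  hard : Set (Clause (L.arity conn))
  soft : Set (Set (Fin (L.arity conn)))

/-- A canonical system: a collection of canonical rules. -/
structure CanSys (L : Lang) where
  rights : Set (RightRule L)
  lefts : Set (LeftRule L)

/-- The sequent obtained by instantiating a clause with a substitution. -/
def Clause.seq {L : Lang} {n : ℕ} (σ : Fin n → Fm L) (c : Clause n) : Sequent L :=
  ⟨σ '' c.lhs, c.rhs.map σ⟩

/-- Derivability in a canonical system `G` from assumptions `S`,
where all cut formulas must belong to `C`. -/
inductive Deriv {L : Lang} (G : CanSys L) (S : Set (Sequent L)) (C : Set (Fm L)) :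
    Sequent L → Prop
  | hyp {s : Sequent L} : s ∈ S → Deriv G S C s
  | ax (φ : Fm L) : Deriv G S C ⟨{φ}, some φ⟩
  | weakL {Γ Γ' : Set (Fm L)} {E : Option (Fm L)} :
      Deriv G S C ⟨Γ, E⟩ → Γ ⊆ Γ' → Deriv G S C ⟨Γ', E⟩
  | weakR {Γ : Set (Fm L)} (ψ : Fm L) :
      Deriv G S C ⟨Γ, none⟩ → Deriv G S C ⟨Γ, some ψ⟩
  | cut {Γ Δ : Set (Fm L)} {φ : Fm L} {E : Option (Fm L)} :
      φ ∈ C → Deriv G S C ⟨Γ, some φ⟩ → Deriv G S C ⟨insert φ Δ, E⟩ →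
      Deriv G S C ⟨Γ ∪ Δ, E⟩
  | right {Γ : Set (Fm L)} (rr : RightRule L) (hr : rr ∈ G.rights)
      (σ : Fin (L.arity rr.conn) → Fm L) :
      (∀ c ∈ rr.prem, Deriv G S C ⟨Γ ∪ σ '' c.lhs, c.rhs.map σ⟩) →
      Deriv G S C ⟨Γ, some (Fm.conn rr.conn σ)⟩
  | left {Γ : Set (Fm L)} {E : Option (Fm L)} (lr : LeftRule L) (hl : lr ∈ G.lefts)
      (σ : Fin (L.arity lr.conn) → Fm L) :
      (∀ c ∈ lr.hard, Deriv G S C ⟨Γ ∪ σ '' c.lhs, c.rhs.map σ⟩) →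
      (∀ t ∈ lr.soft, Deriv G S C ⟨Γ ∪ σ '' t, E⟩) →
      Deriv G S C ⟨insert (Fm.conn lr.conn σ) Γ, E⟩

/-- The set of formulas occurring in some sequent of `S`. -/
def cutFms {L : Lang} (S : Set (Sequent L)) : Set (Fm L) :=
  {φ | ∃ s ∈ S, φ ∈ s.left ∨ s.right = some φ}

/-- Classical satisfaction of a Horn clause by a two-valued assignment. -/
def Clause.sat {n : ℕ} (v : Fin n → Bool) (c : Clause n) : Prop :=
  (∃ p ∈ c.lhs, v p = false) ∨ (∃ q, c.rhs = some q ∧ v q = true)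

/-- Joint classical satisfiability of the premises of a left rule and a right rule. -/
def JointSat {L : Lang} (lr : LeftRule L) (rr : RightRule L)
    (h : L.arity lr.conn = L.arity rr.conn) : Prop :=
  ∃ v : Fin (L.arity lr.conn) → Bool,
    (∀ c ∈ lr.hard, c.sat v) ∧
    (∀ t ∈ lr.soft, ∃ p ∈ t, v p = false) ∧
    (∀ c ∈ rr.prem, c.sat (fun i => v (Fin.cast h.symm i)))

/-- Coherence: matching left/right rule pairs have jointly unsatisfiable premises. -/
def Coherent {L : Lang} (G : CanSys L) : Prop :=
  ∀ lr ∈ G.lefts, ∀ rr ∈ G.rights, ∀ h : lr.conn = rr.conn,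
    ¬ JointSat lr rr (congrArg L.arity h)

section Semantics

variable {L : Lang} {W : Type}

/-- A sequent is locally true at a world. -/
def locT (v : W → Fm L → Bool) (a : W) (s : Sequent L) : Prop :=
  (∃ ψ ∈ s.left, v a ψ = false) ∨ (∃ φ, s.right = some φ ∧ v a φ = true)

/-- A sequent is (absolutely) true at a world: locally true at all successors. -/
def absT (le : W → W → Prop) (v : W → Fm L → Bool) (a : W) (s : Sequent L) : Prop :=
  ∀ b, le a b → locT v b s

/-- Persistence of a valuation. -/
def PersistentU (le : W → W → Prop) (v : W → Fm L → Bool) : Prop :=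
  ∀ (φ : Fm L) (a b : W), le a b → v a φ = true → v b φ = true

/-- A valuation respects a right-introduction rule. -/
def RespR (le : W → W → Prop) (v : W → Fm L → Bool) (rr : RightRule L) : Prop :=
  ∀ (a : W) (σ : Fin (L.arity rr.conn) → Fm L),
    (∀ c ∈ rr.prem, absT le v a (c.seq σ)) → v a (Fm.conn rr.conn σ) = true

/-- A valuation respects a left-introduction rule. -/
def RespL (le : W → W → Prop) (v : W → Fm L → Bool) (lr : LeftRule L) : Prop :=
  ∀ (a : W) (σ : Fin (L.arity lr.conn) → Fm L),
    (∀ c ∈ lr.hard, absT le v a (c.seq σ)) →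
    (∀ t ∈ lr.soft, locT v a ⟨σ '' t, (none : Option (Fm L))⟩) →
    v a (Fm.conn lr.conn σ) = false

/-- A valuation is G-legal: it respects all rules of G. -/
def LegalU (G : CanSys L) (le : W → W → Prop) (v : W → Fm L → Bool) : Prop :=
  (∀ rr ∈ G.rights, RespR le v rr) ∧ (∀ lr ∈ G.lefts, RespL le v lr)

end Semantics

/-- Semantic consequence: every G-legal frame which is a model of S is a model of s. -/
def SemConseq {L : Lang} (G : CanSys L) (S : Set (Sequent L)) (s : Sequent L) : Prop :=
  ∀ (W : Type) (le : W → W → Prop),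
    (∀ a, le a a) → (∀ a b c, le a b → le b c → le a c) →
    (∀ a b, le a b → le b a → a = b) → Nonempty W →
    ∀ v : W → Fm L → Bool, PersistentU le v → LegalU G le v →
      (∀ t ∈ S, ∀ a, locT v a t) → (∀ a, locT v a s)

/-- Strong consistency: the empty sequent is not derivable from { ⇒ p₁, p₂ ⇒ }. -/
def StronglyConsistent {L : Lang} (G : CanSys L) : Prop :=
  ¬ Deriv G ({⟨∅, some (Fm.atom 0)⟩, ⟨{Fm.atom 1}, none⟩} : Set (Sequent L))
      Set.univ ⟨∅, none⟩

/-- Strong cut-elimination. -/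
def StrongCutElim {L : Lang} (G : CanSys L) : Prop :=
  ∀ (S : Set (Sequent L)) (s : Sequent L),
    Deriv G S Set.univ s → Deriv G S (cutFms S) s

/-- Cut-elimination for proofs from no assumptions. -/
def CutElim {L : Lang} (G : CanSys L) : Prop :=
  ∀ s : Sequent L, Deriv G ∅ Set.univ s → Deriv G ∅ ∅ s

/-- Consistency: p₁ ⇒ p₂ is not derivable from no assumptions. -/
def Consistent {L : Lang} (G : CanSys L) : Prop :=
  ¬ Deriv G ∅ Set.univ ⟨{Fm.atom 0}, some (Fm.atom 1)⟩

/-- A canonical system is definite if all premises of right rules and all hard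
premises of left rules are definite clauses. -/
def DefiniteSys {L : Lang} (G : CanSys L) : Prop :=
  (∀ rr ∈ G.rights, ∀ c ∈ rr.prem, c.rhs.isSome = true) ∧
  (∀ lr ∈ G.lefts, ∀ c ∈ lr.hard, c.rhs.isSome = true)

/-!
Coherence is the pivot. If the premises of a left and a right rule for `⋄` are jointly satisfied
by an assignment `v`, instantiate both rules with `p₁` at the true and `p₂` at the false indices
of `v`: the instantiated premises become derivable from `{⇒ p₁, p₂ ⇒}` (and, when they are
definite, from no assumptions in the context `p₁`), and a cut on `⋄(…)` yields `⇒` (resp.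
`p₁ ⇒ p₂`). Conversely, under coherence the two-valued valuation making `p₁` true, the other atoms
false, and `⋄(ψ⃗)` true iff some right rule for `⋄` has classically true premises respects every
rule, so it refutes `⇒` from `{⇒ p₁, p₂ ⇒}`.

For strong cut-elimination, a cut on a formula outside the assumptions is admissible by induction
on the cut formula `⋄(ψ⃗)`: its left premise is traced up to the right introduction of `⋄(ψ⃗)`, its
right premise up to the left introductions. A principal pair is resolved by the assignment
`i ↦ [Γ ⇒ ψᵢ is derivable]`, which satisfies every definite premise; coherence then provides a soft
premise all of whose formulas are derivable, and it is cut away by multicut on the `ψᵢ`. Finally,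
a cut-free proof from no assumptions never ends in an atomic sequent with disjoint sides, so
cut-elimination gives consistency.
-/

section

variable {L : Lang} {G : CanSys L} {S : Set (Sequent L)} {C : Set (Fm L)}

theorem Deriv.of_mem {Γ : Set (Fm L)} {φ : Fm L} (h : φ ∈ Γ) : Deriv G S C ⟨Γ, some φ⟩ :=
  (Deriv.ax φ).weakL (Set.singleton_subset_iff.mpr h)

theorem Deriv.of_none {Γ : Set (Fm L)} (h : Deriv G S C ⟨Γ, none⟩) :
    ∀ E, Deriv G S C ⟨Γ, E⟩
  | none => h
  | some ψ => h.weakR ψ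

section Instantiation

variable {n : ℕ} {v : Fin n → Bool} {Γ : Set (Fm L)} {φT φF : Fm L}

theorem Deriv.clause_of_sat {cl : Clause n} (hcl : cl.sat v) (hT : Deriv G S C ⟨Γ, some φT⟩)
    (hF : cl.rhs = none → Deriv G S C ⟨insert φF Γ, none⟩) :
    Deriv G S C ⟨Γ ∪ (fun i => cond (v i) φT φF) '' cl.lhs,
      cl.rhs.map fun i => cond (v i) φT φF⟩ := by
  have hT' : Deriv G S C ⟨Γ ∪ (fun i => cond (v i) φT φF) '' cl.lhs, some φT⟩ :=
    hT.weakL Set.subset_union_left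
  rcases hcl with ⟨p, hp, hvp⟩ | ⟨q, hq, hvq⟩
  · have hφF : φF ∈ (fun i => cond (v i) φT φF) '' cl.lhs := ⟨p, hp, by simp [hvp]⟩
    rcases hrhs : cl.rhs with _ | q
    · exact (hF hrhs).weakL (Set.insert_subset (Or.inr hφF) Set.subset_union_left)
    · cases hvq : v q
      · simpa [hvq] using Deriv.of_mem (G := G) (S := S) (C := C) (Or.inr hφF)
      · simpa [hvq] using hT'
  · simpa [hq, hvq] using hT'

theorem Deriv.cut_of_sat_premises {c : L.Conn} {hard prem : Set (Clause (L.arity c))}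
    {soft : Set (Set (Fin (L.arity c)))} (hl : ⟨c, hard, soft⟩ ∈ G.lefts)
    (hr : ⟨c, prem⟩ ∈ G.rights) {v : Fin (L.arity c) → Bool} (hsat : ∀ cl ∈ hard ∪ prem, cl.sat v)
    (hsoft : ∀ t ∈ soft, ∃ p ∈ t, v p = false) {Γ : Set (Fm L)} {E : Option (Fm L)}
    (hT : Deriv G S Set.univ ⟨Γ, some φT⟩) (hFE : Deriv G S Set.univ ⟨insert φF Γ, E⟩)
    (hF : ∀ cl ∈ hard ∪ prem, cl.rhs = none → Deriv G S Set.univ ⟨insert φF Γ, none⟩) :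
    Deriv G S Set.univ ⟨Γ, E⟩ := by
  set σ : Fin (L.arity c) → Fm L := fun i => cond (v i) φT φF
  have hclause (cl) (hcl : cl ∈ hard ∪ prem) :
      Deriv G S Set.univ ⟨Γ ∪ σ '' cl.lhs, cl.rhs.map σ⟩ :=
    Deriv.clause_of_sat (hsat cl hcl) hT (hF cl hcl)
  have hright : Deriv G S Set.univ ⟨Γ, some (.conn c σ)⟩ :=
    Deriv.right _ hr σ fun cl hcl => hclause cl (Or.inr hcl)
  have hleft : Deriv G S Set.univ ⟨insert (.conn c σ) Γ, E⟩ := by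
    refine Deriv.left _ hl σ (fun cl hcl => hclause cl (Or.inl hcl)) fun t ht => ?_
    obtain ⟨p, hp, hvp⟩ := hsoft t ht
    exact hFE.weakL (Set.insert_subset (Or.inr ⟨p, hp, by simp [σ, hvp]⟩) Set.subset_union_left)
  simpa using Deriv.cut (Set.mem_univ _) hright hleft

end Instantiation

theorem coherent_iff : Coherent G ↔
    ∀ (c : L.Conn) (hard prem : Set (Clause (L.arity c))) (soft : Set (Set (Fin (L.arity c)))),
      ⟨c, hard, soft⟩ ∈ G.lefts → ⟨c, prem⟩ ∈ G.rights →
      ¬ ∃ v, (∀ cl ∈ hard ∪ prem, cl.sat v) ∧ ∀ t ∈ soft, ∃ p ∈ t, v p = false := by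
  constructor
  · rintro hcoh c hard prem soft hl hr ⟨v, hsat, hsoft⟩
    exact hcoh _ hl _ hr rfl
      ⟨v, fun cl h => hsat cl (Or.inl h), hsoft, fun cl h => hsat cl (Or.inr h)⟩
  · rintro h ⟨c, hard, soft⟩ hl ⟨c', prem⟩ hr (e : c = c')
    subst e
    rintro ⟨v, hhard, hsoft, hprem⟩
    exact h c hard prem soft hl hr
      ⟨v, by rintro cl (hcl | hcl) <;> [exact hhard cl hcl; exact hprem cl hcl], hsoft⟩

theorem coherent_of_stronglyConsistent (h : StronglyConsistent G) : Coherent G := by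
  refine coherent_iff.mpr fun c hard prem soft hl hr ⟨v, hsat, hsoft⟩ => h ?_
  have hF : Deriv G {⟨∅, some (Fm.atom 0)⟩, ⟨{Fm.atom 1}, none⟩} Set.univ
      ⟨insert (Fm.atom 1) ∅, none⟩ := by
    simpa using Deriv.hyp (Or.inr rfl)
  exact Deriv.cut_of_sat_premises hl hr hsat hsoft (Deriv.hyp (Or.inl rfl)) hF fun _ _ _ => hF

theorem coherent_of_consistent (hdef : DefiniteSys G) (h : Consistent G) : Coherent G := by
  refine coherent_iff.mpr fun c hard prem soft hl hr ⟨v, hsat, hsoft⟩ => h ?_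
  refine Deriv.cut_of_sat_premises (Γ := {Fm.atom 0}) hl hr hsat hsoft
    (Deriv.ax _) (Deriv.of_mem (Set.mem_insert _ _)) ?_
  rintro cl (hcl | hcl) hnone
  · simpa [hnone] using hdef.2 _ hl cl hcl
  · simpa [hnone] using hdef.1 _ hr cl hcl

section TwoValued

def Sequent.Sat (v : Fm L → Bool) (s : Sequent L) : Prop :=
  (∃ ψ ∈ s.left, v ψ = false) ∨ (∃ φ, s.right = some φ ∧ v φ = true)

variable {v : Fm L → Bool}

theorem Sequent.sat_union_iff {Γ Δ : Set (Fm L)} {E : Option (Fm L)} :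
    Sequent.Sat v ⟨Γ ∪ Δ, E⟩ ↔ (∃ ψ ∈ Γ, v ψ = false) ∨ Sequent.Sat v ⟨Δ, E⟩ := by
  simp only [Sequent.Sat, Set.mem_union]
  constructor
  · rintro (⟨ψ, hψ | hψ, h⟩ | h)
    exacts [Or.inl ⟨ψ, hψ, h⟩, Or.inr (Or.inl ⟨ψ, hψ, h⟩), Or.inr (Or.inr h)]
  · rintro (⟨ψ, hψ, h⟩ | ⟨ψ, hψ, h⟩ | h)
    exacts [Or.inl ⟨ψ, Or.inl hψ, h⟩, Or.inl ⟨ψ, Or.inr hψ, h⟩, Or.inr h]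

theorem Clause.sat_comp_iff {n : ℕ} {σ : Fin n → Fm L} {cl : Clause n} :
    Sequent.Sat v ⟨σ '' cl.lhs, cl.rhs.map σ⟩ ↔ cl.sat (v ∘ σ) := by
  simp [Sequent.Sat, Clause.sat]

theorem Deriv.sat
    (hR : ∀ rr ∈ G.rights, ∀ σ, (∀ cl ∈ rr.prem, cl.sat (v ∘ σ)) → v (.conn rr.conn σ) = true)
    (hL : ∀ lr ∈ G.lefts, ∀ σ, (∀ cl ∈ lr.hard, cl.sat (v ∘ σ)) →
      (∀ t ∈ lr.soft, ∃ p ∈ t, v (σ p) = false) → v (.conn lr.conn σ) = false)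
    (hS : ∀ s ∈ S, s.Sat v) {s : Sequent L} (d : Deriv G S C s) : s.Sat v := by
  induction d with
  | hyp hs => exact hS _ hs
  | ax φ => cases h : v φ <;> simp [Sequent.Sat, h]
  | weakL _ hsub ih =>
    rcases ih with ⟨ψ, hψ, h⟩ | h
    exacts [Or.inl ⟨ψ, hsub hψ, h⟩, Or.inr h]
  | weakR _ _ ih => exact Or.inl (ih.resolve_right (by simp))
  | @cut Γ Δ φ E _ _ _ iha ihb =>
    rcases iha with ⟨ψ, hψ, h⟩ | ⟨_, ⟨⟩, hφ⟩
    · exact Or.inl ⟨ψ, Or.inl hψ, h⟩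
    rcases ihb with ⟨ψ, rfl | hψ, h⟩ | h
    · exact absurd hφ (by simp [h])
    exacts [Or.inl ⟨ψ, Or.inr hψ, h⟩, Or.inr h]
  | @right Γ rr hr σ _ ih =>
    by_cases hΓ : ∃ ψ ∈ Γ, v ψ = false
    · exact Or.inl hΓ
    refine Or.inr ⟨_, rfl, hR rr hr σ fun cl hcl => ?_⟩
    exact Clause.sat_comp_iff.mp ((Sequent.sat_union_iff.mp (ih cl hcl)).resolve_left hΓ)
  | @left Γ E lr hl σ _ _ ihh ihs =>
    by_cases hΓ : ∃ ψ ∈ Γ, v ψ = false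
    · obtain ⟨ψ, hψ, h⟩ := hΓ
      exact Or.inl ⟨ψ, Or.inr hψ, h⟩
    by_cases hE : ∃ φ, E = some φ ∧ v φ = true
    · exact Or.inr hE
    refine Or.inl ⟨_, Or.inl rfl, hL lr hl σ (fun cl hcl => ?_) fun t ht => ?_⟩
    · exact Clause.sat_comp_iff.mp ((Sequent.sat_union_iff.mp (ihh cl hcl)).resolve_left hΓ)
    · obtain ⟨_, ⟨p, hp, rfl⟩, h⟩ :=
        ((Sequent.sat_union_iff.mp (ihs t ht)).resolve_left hΓ).resolve_right hE
      exact ⟨p, hp, h⟩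

end TwoValued

open Classical in
noncomputable def canonVal (G : CanSys L) : Fm L → Bool
  | .atom n => decide (n = 0)
  | .conn c σ => decide (∃ rr ∈ G.rights, ∃ h : rr.conn = c,
      ∀ cl ∈ rr.prem, cl.sat fun i => canonVal G (σ (Fin.cast (congrArg L.arity h) i)))

open Classical in
theorem canonVal_conn_of_right {rr : RightRule L} (hr : rr ∈ G.rights)
    {σ : Fin (L.arity rr.conn) → Fm L} (h : ∀ cl ∈ rr.prem, cl.sat (canonVal G ∘ σ)) :
    canonVal G (.conn rr.conn σ) = true := by
  rw [canonVal, decide_eq_true_iff]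
  exact ⟨rr, hr, rfl, h⟩

open Classical in
theorem canonVal_conn_of_left (hcoh : Coherent G) {lr : LeftRule L} (hl : lr ∈ G.lefts)
    {σ : Fin (L.arity lr.conn) → Fm L} (hhard : ∀ cl ∈ lr.hard, cl.sat (canonVal G ∘ σ))
    (hsoft : ∀ t ∈ lr.soft, ∃ p ∈ t, canonVal G (σ p) = false) :
    canonVal G (.conn lr.conn σ) = false := by
  rw [canonVal, decide_eq_false_iff_not]
  rintro ⟨rr, hr, h, hprem⟩
  exact hcoh lr hl rr hr h.symm ⟨canonVal G ∘ σ, hhard, hsoft, hprem⟩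

theorem stronglyConsistent_of_coherent (hcoh : Coherent G) : StronglyConsistent G := by
  intro d
  have hS : ∀ s ∈ ({⟨∅, some (Fm.atom 0)⟩, ⟨{Fm.atom 1}, none⟩} : Set (Sequent L)),
      s.Sat (canonVal G) := by
    rintro s (rfl | rfl)
    · exact Or.inr ⟨_, rfl, rfl⟩
    · exact Or.inl ⟨_, rfl, rfl⟩
  rcases d.sat (fun rr hr _ => canonVal_conn_of_right hr)
    (fun lr hl _ => canonVal_conn_of_left hcoh hl) hS with ⟨_, ⟨⟩, _⟩ | ⟨_, ⟨⟩, _⟩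

theorem not_deriv_cutFree_atomic {s : Sequent L} (hl : s.left ⊆ Set.range Fm.atom)
    (hr : ∀ φ, s.right = some φ → φ ∈ Set.range Fm.atom \ s.left) : ¬ Deriv G ∅ ∅ s := by
  intro d
  induction d with
  | hyp hs => exact hs
  | ax φ => exact (hr φ rfl).2 rfl
  | weakL _ hsub ih =>
    exact ih (hsub.trans hl) fun φ hφ => ⟨(hr φ hφ).1, fun h => (hr φ hφ).2 (hsub h)⟩
  | weakR _ _ ih => exact ih hl (by simp)
  | cut hφ => exact hφ
  | right rr _ σ => exact (hr _ rfl).1.elim fun _ h => by cases h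
  | left lr _ σ => exact (hl (Set.mem_insert _ _)).elim fun _ h => by cases h

theorem consistent_of_cutElim (h : CutElim G) : Consistent G := fun d =>
  not_deriv_cutFree_atomic (by simp) (fun _ hφ => by cases hφ; simp) (h _ d)

theorem cutElim_of_strongCutElim (h : StrongCutElim G) : CutElim G := fun s d => by
  simpa [cutFms] using h ∅ s d

def CutAdmissible (G : CanSys L) (S : Set (Sequent L)) (φ : Fm L) : Prop :=
  ∀ ⦃Γ Δ : Set (Fm L)⦄ ⦃E : Option (Fm L)⦄, Deriv G S (cutFms S) ⟨Γ, some φ⟩ →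
    Deriv G S (cutFms S) ⟨insert φ Δ, E⟩ → Deriv G S (cutFms S) ⟨Γ ∪ Δ, E⟩

theorem Deriv.multicut {Γ X : Set (Fm L)} {E : Option (Fm L)} (hX : X.Finite)
    (hadm : ∀ ψ ∈ X, CutAdmissible G S ψ) (hder : ∀ ψ ∈ X, Deriv G S (cutFms S) ⟨Γ, some ψ⟩)
    (d : Deriv G S (cutFms S) ⟨Γ ∪ X, E⟩) : Deriv G S (cutFms S) ⟨Γ, E⟩ := by
  induction X, hX using Set.Finite.induction_on with
  | empty => simpa using d
  | @insert ψ X _ _ ih =>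
    refine ih (fun χ hχ => hadm χ (.inr hχ)) (fun χ hχ => hder χ (.inr hχ)) ?_
    rw [Set.union_insert] at d
    simpa [← Set.union_assoc] using hadm ψ (.inl rfl) (hder ψ (.inl rfl)) d

theorem Deriv.principal_cut {n : ℕ} {hard prem : Set (Clause n)} {soft : Set (Set (Fin n))}
    (hcoh : ¬ ∃ v, (∀ cl ∈ hard ∪ prem, cl.sat v) ∧ ∀ t ∈ soft, ∃ p ∈ t, v p = false)
    (hdef : ∀ cl ∈ hard ∪ prem, cl.rhs.isSome) {σ : Fin n → Fm L}
    (hadm : ∀ i, CutAdmissible G S (σ i)) {Γ : Set (Fm L)} {E : Option (Fm L)}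
    (hcl : ∀ cl ∈ hard ∪ prem, Deriv G S (cutFms S) ⟨Γ ∪ σ '' cl.lhs, cl.rhs.map σ⟩)
    (hsoft : ∀ t ∈ soft, Deriv G S (cutFms S) ⟨Γ ∪ σ '' t, E⟩) :
    Deriv G S (cutFms S) ⟨Γ, E⟩ := by
  have hmulticut (X : Set (Fin n)) {E' : Option (Fm L)}
      (hX : ∀ p ∈ X, Deriv G S (cutFms S) ⟨Γ, some (σ p)⟩)
      (d : Deriv G S (cutFms S) ⟨Γ ∪ σ '' X, E'⟩) : Deriv G S (cutFms S) ⟨Γ, E'⟩ :=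
    d.multicut (X.toFinite.image σ) (by rintro _ ⟨p, -, rfl⟩; exact hadm p)
      (by rintro _ ⟨p, hp, rfl⟩; exact hX p hp)
  classical
  -- Derivability of `Γ ⇒ σ i` is closed under the definite premises (by multicut),
  -- so it satisfies them.
  set v : Fin n → Bool := fun i => decide (Deriv G S (cutFms S) ⟨Γ, some (σ i)⟩)
  have hsat (cl) (hmem : cl ∈ hard ∪ prem) : cl.sat v := by
    by_cases hlhs : ∀ p ∈ cl.lhs, v p = true
    · obtain ⟨q, hq⟩ := Option.isSome_iff_exists.mp (hdef cl hmem)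
      refine Or.inr ⟨q, hq, decide_eq_true ?_⟩
      exact hmulticut cl.lhs (fun p hp => of_decide_eq_true (hlhs p hp))
        (by simpa [hq] using hcl cl hmem)
    · push Not at hlhs
      obtain ⟨p, hp, hvp⟩ := hlhs
      exact Or.inl ⟨p, hp, by simpa using hvp⟩
  obtain ⟨t, ht, htrue⟩ : ∃ t ∈ soft, ∀ p ∈ t, v p = true := by
    by_contra! hne
    exact hcoh ⟨v, hsat, fun t ht => by simpa using hne t ht⟩
  exact hmulticut t (fun p hp => of_decide_eq_true (htrue p hp)) (hsoft t ht)

theorem Deriv.cut_rightIntro (hdef : DefiniteSys G) (hcoh : Coherent G) {c : L.Conn}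
    {prem : Set (Clause (L.arity c))} (hr : ⟨c, prem⟩ ∈ G.rights) {σ : Fin (L.arity c) → Fm L}
    (hadm : ∀ i, CutAdmissible G S (σ i)) {Γ₀ : Set (Fm L)}
    (hprem : ∀ cl ∈ prem, Deriv G S (cutFms S) ⟨Γ₀ ∪ σ '' cl.lhs, cl.rhs.map σ⟩)
    {s : Sequent L} (d : Deriv G S (cutFms S) s) {Γ : Set (Fm L)}
    (hs : s.left ⊆ insert (.conn c σ) Γ) : Deriv G S (cutFms S) ⟨Γ₀ ∪ Γ, s.right⟩ := by
  have hφ : Deriv G S (cutFms S) ⟨Γ₀, some (.conn c σ)⟩ := Deriv.right _ hr σ hprem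
  have hctx {Γ₁ Γ : Set (Fm L)} (X : Set (Fm L)) (h : Γ₁ ⊆ insert (.conn c σ) Γ) :
      Γ₁ ∪ X ⊆ insert (.conn c σ) (Γ ∪ X) :=
    (Set.union_subset_union_left X h).trans_eq Set.insert_union
  induction d generalizing Γ with
  | @hyp s hS =>
    -- an assumption mentioning `⋄σ` puts it into `cutFms S`, so that cut is allowed
    by_cases hmem : Fm.conn c σ ∈ s.left
    · exact Deriv.cut ⟨s, hS, Or.inl hmem⟩ hφ ((Deriv.hyp hS).weakL hs)
    · refine (Deriv.hyp hS).weakL fun ψ hψ => Or.inr ?_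
      exact (hs hψ).resolve_left fun h => hmem (h ▸ hψ)
  | ax ψ =>
    rcases Set.singleton_subset_iff.mp hs with rfl | hψ
    · exact hφ.weakL Set.subset_union_left
    · exact Deriv.of_mem (Or.inr hψ)
  | weakL _ hsub ih => exact ih (hsub.trans hs)
  | weakR ψ _ ih => exact (ih hs).weakR ψ
  | @cut Γ₁ Δ₁ ψ E hψ _ _ iha ihb =>
    have h₁ := iha (Γ := Γ) (Set.subset_union_left.trans hs)
    have h₂ := ihb (Γ := insert ψ Γ)
      ((Set.insert_subset_insert (Set.subset_union_right.trans hs)).trans_eq (Set.insert_comm ..))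
    rw [Set.union_insert] at h₂
    simpa using Deriv.cut hψ h₁ h₂
  | @right Γ₁ rr hr' σ' _ ih =>
    refine Deriv.right rr hr' σ' fun cl hcl => ?_
    simpa [Set.union_assoc] using ih cl hcl (Γ := Γ ∪ σ' '' cl.lhs) (hctx _ hs)
  | @left Γ₁ E lr hl σ' _ _ ihh ihs =>
    obtain ⟨hθ, hΓ₁⟩ := Set.insert_subset_iff.mp hs
    have hhard (cl) (hcl : cl ∈ lr.hard) :
        Deriv G S (cutFms S) ⟨Γ₀ ∪ Γ ∪ σ' '' cl.lhs, cl.rhs.map σ'⟩ := by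
      simpa [Set.union_assoc] using ihh cl hcl (Γ := Γ ∪ σ' '' cl.lhs) (hctx _ hΓ₁)
    have hsoft (t) (ht : t ∈ lr.soft) : Deriv G S (cutFms S) ⟨Γ₀ ∪ Γ ∪ σ' '' t, E⟩ := by
      simpa [Set.union_assoc] using ihs t ht (Γ := Γ ∪ σ' '' t) (hctx _ hΓ₁)
    rcases hθ with hθ | hθ
    · obtain ⟨c', hard, soft⟩ := lr
      cases hθ
      refine Deriv.principal_cut (coherent_iff.mp hcoh _ hard prem soft hl hr) ?_ hadm ?_ hsoft
      · rintro cl (hcl | hcl)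
        exacts [hdef.2 _ hl cl hcl, hdef.1 _ hr cl hcl]
      · rintro cl (hcl | hcl)
        · exact hhard cl hcl
        · exact (hprem cl hcl).weakL (Set.union_subset_union_left _ Set.subset_union_left)
    · have := Deriv.left lr hl σ' hhard hsoft
      rwa [Set.insert_eq_of_mem (Set.mem_union_right Γ₀ hθ)] at this

theorem cutAdmissible_of_rightIntro {φ : Fm L}
    (hright : ∀ rr ∈ G.rights, ∀ σ, Fm.conn rr.conn σ = φ → ∀ ⦃Γ Δ E⦄,
      (∀ cl ∈ rr.prem, Deriv G S (cutFms S) ⟨Γ ∪ σ '' cl.lhs, cl.rhs.map σ⟩) →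
      Deriv G S (cutFms S) ⟨insert φ Δ, E⟩ → Deriv G S (cutFms S) ⟨Γ ∪ Δ, E⟩) :
    CutAdmissible G S φ := by
  suffices ∀ s, Deriv G S (cutFms S) s → s.right = some φ → ∀ ⦃Δ E⦄,
      Deriv G S (cutFms S) ⟨insert φ Δ, E⟩ → Deriv G S (cutFms S) ⟨s.left ∪ Δ, E⟩ from
    fun Γ Δ E d₁ d₂ => this _ d₁ rfl d₂
  intro s d
  induction d with
  | @hyp s hS =>
    obtain ⟨Γ, E⟩ := s
    rintro rfl Δ E' d₂
    exact Deriv.cut ⟨_, hS, Or.inr rfl⟩ (Deriv.hyp hS) d₂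
  | ax ψ =>
    rintro ⟨⟩ Δ E d₂
    simpa [Set.singleton_union] using d₂
  | weakL _ hsub ih => exact fun hφ Δ E d₂ => (ih hφ d₂).weakL (Set.union_subset_union_left Δ hsub)
  | weakR ψ d _ =>
    rintro ⟨⟩ Δ E _
    exact (d.weakL Set.subset_union_left).of_none E
  | cut hψ d₁ _ _ ih =>
    intro hφ Δ E d₂
    have := ih hφ d₂
    rw [Set.insert_union] at this
    simpa [Set.union_assoc] using Deriv.cut hψ d₁ this
  | right rr hr σ prems =>
    rintro ⟨⟩ Δ E d₂
    exact hright rr hr σ rfl prems d₂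
  | left lr hl σ hards _ _ ih =>
    intro hφ Δ E d₂
    rw [Set.insert_union]
    refine Deriv.left lr hl σ (fun cl hcl => (hards cl hcl).weakL ?_) fun t ht => ?_
    · exact Set.union_subset_union_left _ Set.subset_union_left
    · exact (ih t ht hφ d₂).weakL (Set.union_right_comm _ _ _).subset

theorem cutAdmissible_of_coherent (hdef : DefiniteSys G) (hcoh : Coherent G) (φ : Fm L) :
    CutAdmissible G S φ := by
  induction φ with
  | atom n => exact cutAdmissible_of_rightIntro fun _ _ _ h => by cases h
  | conn c σ ih =>
    refine cutAdmissible_of_rightIntro fun ⟨c', prem⟩ hr σ' h Γ Δ E hprem d₂ => ?_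
    cases h
    exact d₂.cut_rightIntro hdef hcoh hr ih hprem subset_rfl

theorem strongCutElim_of_coherent (hdef : DefiniteSys G) (hcoh : Coherent G) :
    StrongCutElim G := by
  intro S s d
  induction d with
  | hyp hs => exact .hyp hs
  | ax φ => exact .ax φ
  | weakL _ hsub ih => exact ih.weakL hsub
  | weakR ψ _ ih => exact ih.weakR ψ
  | cut _ _ _ ih₁ ih₂ => exact cutAdmissible_of_coherent hdef hcoh _ ih₁ ih₂
  | right rr hr σ _ ih => exact .right rr hr σ ih
  | left lr hl σ _ _ ihh ihs => exact .left lr hl σ ihh ihs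

end

/-- For definite canonical systems, strong consistency,
coherence, strong cut-elimination, cut-elimination and consistency are
equivalent. -/
theorem definite_equivalences {L : Lang} (G : CanSys L) (hdef : DefiniteSys G) :
    (StronglyConsistent G ↔ Coherent G) ∧ (Coherent G ↔ StrongCutElim G) ∧
    (StrongCutElim G ↔ CutElim G) ∧ (CutElim G ↔ Consistent G) := by
  have h₁ : Coherent G → StrongCutElim G := strongCutElim_of_coherent hdef
  have h₂ : StrongCutElim G → CutElim G := cutElim_of_strongCutElim
  have h₃ : CutElim G → Consistent G := consistent_of_cutElim
  have h₄ : Consistent G → Coherent G := coherent_of_consistent hdef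
  exact ⟨⟨coherent_of_stronglyConsistent, stronglyConsistent_of_coherent⟩,
    ⟨h₁, h₄ ∘ h₃ ∘ h₂⟩, ⟨h₂, h₁ ∘ h₄ ∘ h₃⟩, ⟨h₃, h₂ ∘ h₁ ∘ h₄⟩⟩
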